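/- arXiv:2204.08823 — 12 statements merged into one kernel-verified Lean document; each statement's English description precedes it below -/
import Mathlib

section
/- For every real polynomial p of degree at most 4, every x ∈ ℝ and every h ∈ ℝ, the full-stencil Hermite interpolation formula is exact: p(x + h/2) = -(1/8)·p(x-h) + (9/16)·p(x) + (9/16)·p(x+h) - (3h/64)·(p'(x-h) + 3·p'(x+h)), where p' denotes the derivative of p. -/
theorem hermite_full_stencil_value_exact
    (p : Polynomial ℝ) (hp : p.degree ≤ 4) (x h : ℝ) :
    p.eval (x + h / 2) =
      -(1/8) * p.eval (x - h) + (9/16) * p.eval x + (9/16) * p.eval (x + h)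
        - (3 * h / 64) * (p.derivative.eval (x - h) + 3 * p.derivative.eval (x + h)) := by
  have hle : p.natDegree ≤ 4 := Polynomial.natDegree_le_iff_degree_le.mpr (by exact_mod_cast hp)
  have hlt : p.natDegree < 5 := by omega
  have hd : p.derivative.natDegree < 5 :=
    by have := Polynomial.natDegree_derivative_le p; omega
  have he : ∀ y : ℝ, p.eval y = ∑ i ∈ Finset.range 5, p.coeff i * y ^ i := fun y =>
    Polynomial.eval_eq_sum_range' hlt y
  have he' : ∀ y : ℝ, p.derivative.eval y = ∑ i ∈ Finset.range 5, p.derivative.coeff i * y ^ i :=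
    fun y => Polynomial.eval_eq_sum_range' hd y
  simp only [he, he', Polynomial.coeff_derivative, Finset.sum_range_succ,
    Finset.sum_range_zero]
  have h5 : p.coeff 5 = 0 := Polynomial.coeff_eq_zero_of_degree_lt
    (lt_of_le_of_lt hp (by norm_num))
  push_cast
  rw [h5]
  ring
end

section
/- Fix h ∈ ℝ with h ≠ 0. If real numbers w₁, w₂, w₃ satisfy, for all real a, b, c, d, e, the identity w₁·(-(5/4)a + (9/4)b - (3h/4)d) + w₂·((1/4)b + (3/4)c - (h/4)e) + w₃·(-(1/8)a + (3/4)b + (3/8)c) = -(1/8)a + (9/16)b + (9/16)c - (3h/64)(d + 3e), then necessarily w₁ = 1/16, w₂ = 9/16 and w₃ = 3/8. -/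
theorem linear_weights_value_unique
    (h : ℝ) (hh : h ≠ 0) (w₁ w₂ w₃ : ℝ)
    (hw : ∀ a b c d e : ℝ,
      w₁ * (-(5/4) * a + (9/4) * b - (3 * h / 4) * d)
        + w₂ * ((1/4) * b + (3/4) * c - (h / 4) * e)
        + w₃ * (-(1/8) * a + (3/4) * b + (3/8) * c)
      = -(1/8) * a + (9/16) * b + (9/16) * c - (3 * h / 64) * (d + 3 * e)) :
    w₁ = 1/16 ∧ w₂ = 9/16 ∧ w₃ = 3/8 := by
  have h1 := hw 0 0 0 1 0
  have h2 := hw 0 0 0 0 1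
  have h3 := hw 1 0 0 0 0
  have hw1 : w₁ = 1/16 := by
    have key : (w₁ - 1/16) * h = 0 := by linear_combination (-4/3 : ℝ) * h1
    rcases mul_eq_zero.mp key with hk | hk
    · linarith
    · exact absurd hk hh
  have hw2 : w₂ = 9/16 := by
    have key : (w₂ - 9/16) * h = 0 := by linear_combination (-4 : ℝ) * h2
    rcases mul_eq_zero.mp key with hk | hk
    · linarith
    · exact absurd hk hh
  refine ⟨hw1, hw2, ?_⟩
  rw [hw1] at h3; linarith
end

section
/- For every real polynomial p of degree at most 3, every x ∈ ℝ and every h ∈ ℝ with h ≠ 0, the sub-stencil derivative formula is exact: p'(x + h/2) = (3/(2h))·(p(x+h) - p(x)) - (1/4)·p'(x) - (1/4)·p'(x+h). -/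
theorem hermite_substencil2_derivative_exact
    (p : Polynomial ℝ) (hp : p.degree ≤ 3) (x h : ℝ) (hh : h ≠ 0) :
    p.derivative.eval (x + h / 2) =
      (3 / (2 * h)) * (p.eval (x + h) - p.eval x)
        - (1/4) * p.derivative.eval x - (1/4) * p.derivative.eval (x + h) := by
  have hnd : p.natDegree < 4 := by
    exact Nat.lt_succ_of_le (Polynomial.natDegree_le_iff_degree_le.mpr hp)
  have hdd : p.derivative.natDegree < 4 :=
    lt_of_le_of_lt (Polynomial.natDegree_derivative_le p) (by omega)
  rw [Polynomial.eval_eq_sum_range' hdd, Polynomial.eval_eq_sum_range' hdd,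
    Polynomial.eval_eq_sum_range' hdd, Polynomial.eval_eq_sum_range' hnd,
    Polynomial.eval_eq_sum_range' hnd]
  simp only [Finset.sum_range_succ, Finset.sum_range_zero, Polynomial.coeff_derivative]
  have h4 : p.coeff 4 = 0 := Polynomial.coeff_eq_zero_of_natDegree_lt hnd
  push_cast
  field_simp
  ring_nf
  rw [h4]
  ring
end

section
/- For every real polynomial p of degree at most 3, every x ∈ ℝ and every h ∈ ℝ with h ≠ 0, the sub-stencil derivative formula is exact: p'(x + h/2) = (1/(8h))·(p(x-h) - 8·p(x) + 7·p(x+h)) + (1/4)·p'(x). -/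
theorem hermite_substencil3_derivative_exact
    (p : Polynomial ℝ) (hp : p.degree ≤ 3) (x h : ℝ) (hh : h ≠ 0) :
    p.derivative.eval (x + h / 2) =
      (1 / (8 * h)) * (p.eval (x - h) - 8 * p.eval x + 7 * p.eval (x + h))
        + (1/4) * p.derivative.eval x := by
  have hnd : p.natDegree < 4 := by
    by_cases h0 : p = 0
    · simp [h0]
    · have h1 : p.natDegree ≤ 3 := Polynomial.natDegree_le_iff_degree_le.mpr hp
      omega
  have hnd' : p.derivative.natDegree < 4 :=
    lt_of_le_of_lt (Polynomial.natDegree_derivative_le p) (by omega)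
  have he : ∀ y : ℝ, p.eval y = ∑ i ∈ Finset.range 4, p.coeff i * y ^ i := fun y =>
    Polynomial.eval_eq_sum_range' hnd y
  have hd : ∀ y : ℝ, p.derivative.eval y =
      ∑ i ∈ Finset.range 4, ((i : ℝ) + 1) * p.coeff (i + 1) * y ^ i := by
    intro y
    rw [Polynomial.eval_eq_sum_range' hnd' y]
    exact Finset.sum_congr rfl fun i _ => by rw [Polynomial.coeff_derivative]; ring
  have h4 : p.coeff 4 = 0 := Polynomial.coeff_eq_zero_of_natDegree_lt hnd
  simp only [he, hd, h4, Finset.sum_range_succ, Finset.sum_range_zero]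
  field_simp
  ring
end

section
/- For all real numbers a, b, c, d, e, f and every h ∈ ℝ with h ≠ 0, defining Q₁ = (9/(2h))(a - b) + (7/4)d + (15/4)e, Q₂ = (3/(2h))(c - b) - (1/4)e - (1/4)f, and Q₃ = (1/(8h))(a - 8b + 7c) + (1/4)e, the linear combination with weights 1/112, 15/16, 3/56 reproduces the full-stencil derivative formula: (1/112)Q₁ + (15/16)Q₂ + (3/56)Q₃ = (1/h)((3/64)a - (3/2)b + (93/64)c) + (1/64)(d - 12e - 15f). -/
theorem linear_weights_combine_derivative_interpolations
    (a b c d e f h : ℝ) (hh : h ≠ 0) :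
    (1/112) * ((9 / (2 * h)) * (a - b) + (7/4) * d + (15/4) * e)
      + (15/16) * ((3 / (2 * h)) * (c - b) - (1/4) * e - (1/4) * f)
      + (3/56) * ((1 / (8 * h)) * (a - 8 * b + 7 * c) + (1/4) * e)
    = (1 / h) * ((3/64) * a - (3/2) * b + (93/64) * c)
        + (1/64) * (d - 12 * e - 15 * f) := by
  field_simp
  ring
end

section
/- Fix h ∈ ℝ with h ≠ 0. If real numbers w₁, w₂, w₃ satisfy, for all real a, b, c, d, e, f, the identity w₁·((9/(2h))(a - b) + (7/4)d + (15/4)e) + w₂·((3/(2h))(c - b) - (1/4)e - (1/4)f) + w₃·((1/(8h))(a - 8b + 7c) + (1/4)e) = (1/h)((3/64)a - (3/2)b + (93/64)c) + (1/64)(d - 12e - 15f), then necessarily w₁ = 1/112, w₂ = 15/16 and w₃ = 3/56. -/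
theorem linear_weights_derivative_unique
    (h : ℝ) (hh : h ≠ 0) (w₁ w₂ w₃ : ℝ)
    (hw : ∀ a b c d e f : ℝ,
      w₁ * ((9 / (2 * h)) * (a - b) + (7/4) * d + (15/4) * e)
        + w₂ * ((3 / (2 * h)) * (c - b) - (1/4) * e - (1/4) * f)
        + w₃ * ((1 / (8 * h)) * (a - 8 * b + 7 * c) + (1/4) * e)
      = (1 / h) * ((3/64) * a - (3/2) * b + (93/64) * c)
          + (1/64) * (d - 12 * e - 15 * f)) :
    w₁ = 1/112 ∧ w₂ = 15/16 ∧ w₃ = 3/56 := by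
  have h1 := hw 0 0 0 1 0 0
  have h2 := hw 0 0 0 0 0 1
  have h3 := hw 0 0 0 0 1 0
  simp only [mul_zero, sub_zero, zero_sub, mul_one, add_zero, zero_add] at h1 h2 h3
  refine ⟨by linarith, by linarith, by linarith⟩
end

section
/- Let f : ℝ → ℝ be 5 times continuously differentiable (ContDiff ℝ 5) and fix x ∈ ℝ. Define for h ≠ 0 the sliding cell average A_h(a) = (1/h)·∫_{x+a-h/2}^{x+a+h/2} f(t) dt. Then the reconstruction error h ↦ (3/640)·A_h(-2h) - (29/480)·A_h(-h) + (1067/960)·A_h(0) - (29/480)·A_h(h) + (3/640)·A_h(2h) - f(x) is O(h⁵) as h → 0 along nonzero h (i.e., IsBigO with respect to the punctured neighborhood filter 𝓝[≠] 0 of the function h ↦ h⁵). -/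
/-!
Let `F` be a primitive of `f`. Telescoping the five cell averages writes the reconstruction as
`h⁻¹ ∑ᵢ wᵢ F(x + cᵢ h)` with six nodes `cᵢ ∈ {±1/2, ±3/2, ±5/2}`. Expanding each `F(x + cᵢ h)` to
order six by Taylor's theorem (`F` is `C⁶`), the sum becomes `∑ₖ mₖ hᵏ F⁽ᵏ⁾(x) / k! + O(h⁶)` with
moments `mₖ = ∑ᵢ wᵢ cᵢᵏ`. The weights satisfy `m₁ = 1` and `mₖ = 0` for the other `k < 6`, so the
sum is `h f(x) + O(h⁶)`, and dividing by `h` gives the claim.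
-/

open Asymptotics Filter Topology Finset Nat

section Taylor

variable {E : Type*} [NormedAddCommGroup E] [NormedSpace ℝ E]

theorem taylor_isBigO_univ {f : ℝ → E} {n : ℕ} (hf : ContDiff ℝ (n + 1) f) (x₀ : ℝ) :
    (fun x ↦ f x - taylorWithinEval f n Set.univ x₀ x) =O[𝓝 x₀] fun x ↦ (x - x₀) ^ (n + 1) := by
  have hrem := (taylor_isLittleO_univ (x₀ := x₀) (n := n + 1) (by exact_mod_cast hf)).isBigO
  have htop : (fun x ↦ (((n + 1 : ℝ) * n !)⁻¹ * (x - x₀) ^ (n + 1)) •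
      iteratedDerivWithin (n + 1) f Set.univ x₀) =O[𝓝 x₀] fun x ↦ (x - x₀) ^ (n + 1) := by
    simpa using ((isBigO_refl (fun x : ℝ ↦ (x - x₀) ^ (n + 1)) (𝓝 x₀)).const_mul_left
      ((n + 1 : ℝ) * n !)⁻¹).smul (isBigO_const_one ℝ (iteratedDerivWithin (n + 1) f Set.univ x₀) _)
  refine (hrem.add htop).congr_left fun x ↦ ?_
  rw [taylorWithinEval_succ]
  abel

theorem taylor_isBigO_comp_mul {f : ℝ → E} {n : ℕ} (hf : ContDiff ℝ (n + 1) f) (x c : ℝ) :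
    (fun h ↦ f (x + c * h) - ∑ k ∈ range (n + 1), ((c * h) ^ k / k !) • iteratedDeriv k f x)
      =O[𝓝 0] fun h ↦ h ^ (n + 1) := by
  have hlin : Tendsto (fun h : ℝ ↦ x + c * h) (𝓝 0) (𝓝 x) :=
    (by fun_prop : Continuous fun h : ℝ ↦ x + c * h).tendsto' 0 x (by simp)
  refine (((taylor_isBigO_univ hf x).comp_tendsto hlin).trans ?_).congr_left fun h ↦ ?_
  · simpa [Function.comp_def, mul_pow] using
      (isBigO_refl (fun h : ℝ ↦ h ^ (n + 1)) _).const_mul_left (c ^ (n + 1))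
  · simp [taylor_within_apply, iteratedDerivWithin_univ, div_eq_inv_mul]

theorem sum_smul_comp_mul_sub_moment_taylor_isBigO {ι : Type*} (s : Finset ι) (w c : ι → ℝ)
    {f : ℝ → E} {n : ℕ} (hf : ContDiff ℝ (n + 1) f) (x : ℝ) :
    (fun h ↦ ∑ i ∈ s, w i • f (x + c i * h) -
        ∑ k ∈ range (n + 1), ((∑ i ∈ s, w i * c i ^ k) * h ^ k / k !) • iteratedDeriv k f x)
      =O[𝓝 0] fun h ↦ h ^ (n + 1) := by
  refine (IsBigO.fun_sum (s := s) fun i _ ↦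
    (taylor_isBigO_comp_mul hf x (c i)).const_smul_left (w i)).congr_left fun h ↦ ?_
  simp only [Pi.smul_apply, smul_sub, Finset.smul_sum, smul_smul, Finset.sum_sub_distrib,
    Finset.sum_mul, Finset.sum_div, Finset.sum_smul]
  rw [Finset.sum_comm]
  congr 1
  refine Finset.sum_congr rfl fun k _ ↦ Finset.sum_congr rfl fun i _ ↦ ?_
  congr 1
  ring

theorem ContDiff.primitive [CompleteSpace E] {f : ℝ → E} {n : ℕ} (hf : ContDiff ℝ n f)
    (a : ℝ) : ContDiff ℝ (n + 1) fun y ↦ ∫ t in a..y, f t := by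
  have hderiv : deriv (fun y ↦ ∫ t in a..y, f t) = f :=
    funext (hf.continuous.deriv_integral f a)
  rw [contDiff_succ_iff_deriv, hderiv]
  exact ⟨fun y ↦ (hf.continuous.integral_hasStrictDerivAt a y).hasDerivAt.differentiableAt,
    by simp, hf⟩

end Taylor

noncomputable def wcnsNode : Fin 6 → ℝ := ![5/2, 3/2, 1/2, -1/2, -3/2, -5/2]

/-- `wcnsWeight i` is the coefficient of `F (x + wcnsNode i * h)` once each cell average
`A_h(a)` is written as `(F (x + a + h/2) - F (x + a - h/2)) / h`. -/
noncomputable def wcnsWeight : Fin 6 → ℝ := ![3/640, -25/384, 75/64, -75/64, 25/384, -3/640]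

theorem wcns_moment {k : ℕ} (hk : k < 6) :
    ∑ i, wcnsWeight i * wcnsNode i ^ k = if k = 1 then 1 else 0 := by
  interval_cases k <;> simp [Fin.sum_univ_six, wcnsWeight, wcnsNode] <;> norm_num

theorem wcns_combination_eq_sum_primitive {f F : ℝ → ℝ}
    (hF : ∀ u v, ∫ t in u..v, f t = F v - F u) (x h : ℝ) :
    (let A : ℝ → ℝ := fun a => (1 / h) * ∫ t in (x + a - h / 2)..(x + a + h / 2), f t
     (3/640) * A (-2 * h) - (29/480) * A (-h) + (1067/960) * A 0
       - (29/480) * A h + (3/640) * A (2 * h)) =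
      h⁻¹ * ∑ i, wcnsWeight i * F (x + wcnsNode i * h) := by
  simp only [hF, wcnsWeight, wcnsNode, Fin.sum_univ_six, Matrix.cons_val]
  ring_nf

theorem flux_reconstruction_fifth_order
    (f : ℝ → ℝ) (hf : ContDiff ℝ 5 f) (x : ℝ) :
    (fun h : ℝ =>
        (let A : ℝ → ℝ := fun a => (1 / h) * ∫ t in (x + a - h / 2)..(x + a + h / 2), f t
         (3/640) * A (-2 * h) - (29/480) * A (-h) + (1067/960) * A 0
           - (29/480) * A h + (3/640) * A (2 * h)) - f x)
      =O[nhdsWithin 0 {0}ᶜ] fun h : ℝ => h ^ 5 := by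
  set F : ℝ → ℝ := fun y ↦ ∫ t in x..y, f t
  have hF : ∀ u v, ∫ t in u..v, f t = F v - F u := fun u v ↦
    (intervalIntegral.integral_interval_sub_left (hf.continuous.intervalIntegrable _ _)
      (hf.continuous.intervalIntegrable _ _)).symm
  have hF6 : ContDiff ℝ (5 + 1) F := hf.primitive x
  have hFx : iteratedDeriv 1 F x = f x := by
    rw [iteratedDeriv_one, hf.continuous.deriv_integral f x x]
  have hsum : (fun h ↦ ∑ i, wcnsWeight i * F (x + wcnsNode i * h) - h * f x) =O[𝓝 0]
      fun h ↦ h ^ 6 := by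
    refine (sum_smul_comp_mul_sub_moment_taylor_isBigO Finset.univ wcnsWeight wcnsNode hF6
      x).congr_left fun h ↦ ?_
    simp only [Finset.sum_range_succ, Finset.sum_range_zero, wcns_moment, Nat.reduceLT]
    simp [hFx]
  refine ((isBigO_refl (fun h : ℝ ↦ h⁻¹) _).mul (hsum.mono nhdsWithin_le_nhds)).congr' ?_ ?_
  · filter_upwards [self_mem_nhdsWithin] with h (hh : h ≠ 0)
    rw [wcns_combination_eq_sum_primitive hF]
    field_simp
  · filter_upwards [self_mem_nhdsWithin] with h (hh : h ≠ 0)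
    field_simp
end

section
/- Let u : ℝ → ℝ be 5 times continuously differentiable (ContDiff ℝ 5) and fix x ∈ ℝ. Then the interpolation error h ↦ u(x + h/2) - ( -(1/8)·u(x-h) + (9/16)·u(x) + (9/16)·u(x+h) - (3h/64)·(u'(x-h) + 3·u'(x+h)) ) is O(h⁵) as h → 0 (IsBigO with respect to the filter 𝓝 0 of the function h ↦ h⁵), where u' denotes the derivative of u. -/
/-!
Expand `u` about `x` to degree 4 and `u'` to degree 3, with remainders `R h = O(h⁵)` and
`S h = O(h⁴)`. The stencil is exact on polynomials of degree at most 4, so the Taylor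
polynomials cancel identically and the interpolation error equals
`R (h/2) + R (-h)/8 - 9 R h/16 + 3h S (-h)/64 + 9h S h/64`, each term of which is `O(h⁵)`.
-/

open Asymptotics Filter Topology
open scoped Nat

theorem ContDiff.isBigO_sub_taylor {E : Type*} [NormedAddCommGroup E] [NormedSpace ℝ E]
    {f : ℝ → E} {n : ℕ} (hf : ContDiff ℝ (n + 1) f) (x : ℝ) :
    (fun h : ℝ => f (x + h) -
        ∑ k ∈ Finset.range (n + 1), ((k ! : ℝ)⁻¹ * h ^ k) • iteratedDeriv k f x)
      =O[𝓝 0] fun h : ℝ => h ^ (n + 1) := by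
  have hshift : Tendsto (fun h : ℝ => x + h) (𝓝 0) (𝓝 x) := by
    simpa using tendsto_const_nhds.add (tendsto_id (x := 𝓝 (0 : ℝ)))
  have hrem : (fun h : ℝ => f (x + h) - taylorWithinEval f (n + 1) Set.univ x (x + h))
      =O[𝓝 0] fun h : ℝ => h ^ (n + 1) := by
    simpa only [Function.comp_def, add_sub_cancel_left] using
      ((taylor_isLittleO_univ (x₀ := x) (by exact_mod_cast hf)).comp_tendsto hshift).isBigO
  have htop : (fun h : ℝ => (((n + 1)! : ℝ)⁻¹ * h ^ (n + 1)) • iteratedDeriv (n + 1) f x)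
      =O[𝓝 0] fun h : ℝ => h ^ (n + 1) := by
    simpa using ((isBigO_refl (fun h : ℝ => h ^ (n + 1)) (𝓝 0)).const_mul_left _).smul
      (isBigO_const_one ℝ (iteratedDeriv (n + 1) f x) (𝓝 (0 : ℝ)))
  refine (hrem.add htop).congr_left fun h => ?_
  simp only [taylor_within_apply, iteratedDerivWithin_univ, add_sub_cancel_left,
    Finset.sum_range_succ]
  abel

theorem Asymptotics.IsBigO.comp_const_mul_pow {F : Type*} [Norm F] {R : ℝ → F} {m : ℕ}
    (hR : R =O[𝓝 0] fun h : ℝ => h ^ m) (c : ℝ) :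
    (fun h : ℝ => R (c * h)) =O[𝓝 0] fun h : ℝ => h ^ m := by
  have hc : Tendsto (fun h : ℝ => c * h) (𝓝 0) (𝓝 0) := by
    simpa using (tendsto_id (x := 𝓝 (0 : ℝ))).const_mul c
  refine (hR.comp_tendsto hc).trans ?_
  simpa only [Function.comp_def, mul_pow] using
    (isBigO_refl (fun h : ℝ => h ^ m) _).const_mul_left (c ^ m)

theorem hermite_full_stencil_value_fifth_order
    (u : ℝ → ℝ) (hu : ContDiff ℝ 5 u) (x : ℝ) :
    (fun h : ℝ =>
        u (x + h / 2) -
          (-(1/8) * u (x - h) + (9/16) * u x + (9/16) * u (x + h)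
            - (3 * h / 64) * (deriv u (x - h) + 3 * deriv u (x + h))))
      =O[nhds 0] fun h : ℝ => h ^ 5 := by
  have hR := ContDiff.isBigO_sub_taylor (n := 4) (by exact_mod_cast hu) x
  have hS := ContDiff.isBigO_sub_taylor (n := 3) (hu.deriv' (n := 4)) x
  set R := fun h : ℝ => u (x + h) -
    ∑ k ∈ Finset.range (4 + 1), ((k ! : ℝ)⁻¹ * h ^ k) • iteratedDeriv k u x
  set S := fun h : ℝ => deriv u (x + h) -
    ∑ k ∈ Finset.range (3 + 1), ((k ! : ℝ)⁻¹ * h ^ k) • iteratedDeriv k (deriv u) x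
  have hhS (c : ℝ) : (fun h : ℝ => h * S (c * h)) =O[𝓝 0] fun h : ℝ => h ^ 5 :=
    ((isBigO_refl (fun h : ℝ => h) _).mul (hS.comp_const_mul_pow c)).congr_right
      fun h => by ring
  have hcomb := ((((hR.comp_const_mul_pow (1 / 2)).add
    ((hR.comp_const_mul_pow (-1)).const_mul_left (1 / 8))).sub (hR.const_mul_left (9 / 16))).add
    ((hhS (-1)).const_mul_left (3 / 64))).add ((hhS 1).const_mul_left (9 / 64))
  refine hcomb.congr_left fun h => ?_
  have hhalf : x + 1 / 2 * h = x + h / 2 := by ring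
  have hneg : x + -1 * h = x - h := by ring
  simp only [R, S, hhalf, hneg, one_mul, Finset.sum_range_succ, Finset.sum_range_zero,
    iteratedDeriv_zero, ← iteratedDeriv_succ', smul_eq_mul]
  norm_num [Nat.factorial]
  ring
end

section
/- Let u : ℝ → ℝ be 6 times continuously differentiable (ContDiff ℝ 6) and fix x ∈ ℝ. Then the derivative-interpolation error h ↦ u'(x + h/2) - ( (1/h)·((3/64)u(x-h) - (3/2)u(x) + (93/64)u(x+h)) + (1/64)·(u'(x-h) - 12·u'(x) - 15·u'(x+h)) ) is O(h⁵) as h → 0 along nonzero h (IsBigO with respect to the punctured neighborhood filter 𝓝[≠] 0 of the function h ↦ h⁵), where u' denotes the derivative of u. -/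
/-!
The stencil reproduces the midpoint derivative of every polynomial of degree at most five, so
its error on `u` equals its error on the Taylor remainders `u - T₅u` and `u' - T₄u'`, which are
`O(h⁶)` and `O(h⁵)`. The factor `1 / h` in front of the point values costs one power of `h`.
-/

open Asymptotics Filter Set Topology

lemma sub_taylorWithinEval_isBigO {E : Type*} [NormedAddCommGroup E] [NormedSpace ℝ E]
    {f : ℝ → E} {x₀ : ℝ} {n : ℕ} (hf : ContDiff ℝ (n + 1) f) :
    (fun x ↦ f x - taylorWithinEval f n univ x₀ x) =O[𝓝 x₀] fun x ↦ (x - x₀) ^ (n + 1) := by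
  have hlo := (taylor_isLittleO_univ (x₀ := x₀) (by exact_mod_cast hf)).isBigO
  have hpow : (fun x : ℝ ↦ ((n + 1 : ℝ) * n.factorial)⁻¹ * (x - x₀) ^ (n + 1))
      =O[𝓝 x₀] fun x ↦ (x - x₀) ^ (n + 1) := (isBigO_refl _ _).const_mul_left _
  have hterm := hpow.smul (isBigO_const_one ℝ (iteratedDerivWithin (n + 1) f univ x₀) (𝓝 x₀))
  simp only [smul_eq_mul, mul_one] at hterm
  simpa [taylorWithinEval_succ, sub_add_eq_sub_sub] using hlo.add hterm

lemma Asymptotics.IsBigO.comp_add_mul {E : Type*} [NormedAddCommGroup E] {r : ℝ → E} {x : ℝ}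
    {m : ℕ} (hr : r =O[𝓝 x] fun y ↦ (y - x) ^ m) (a : ℝ) :
    (fun h ↦ r (x + a * h)) =O[𝓝 0] fun h ↦ h ^ m := by
  have hlim : Tendsto (fun h : ℝ ↦ x + a * h) (𝓝 0) (𝓝 x) :=
    (continuous_const.add (continuous_const_mul a)).tendsto' 0 x (by simp)
  have hpow : (fun h : ℝ ↦ (x + a * h - x) ^ m) =O[𝓝 0] fun h ↦ h ^ m := by
    simpa [mul_pow] using (isBigO_refl (fun h : ℝ ↦ h ^ m) (𝓝 0)).const_mul_left (a ^ m)
  exact (hr.comp_tendsto hlim).trans hpow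

/-- `v` stands for the derivative of `u`; the two are kept independent so that the error can be
evaluated on Taylor polynomials and remainders separately. -/
noncomputable def hermiteStencilError (u v : ℝ → ℝ) (x h : ℝ) : ℝ :=
  v (x + h / 2) - ((1 / h) * ((3/64) * u (x - h) - (3/2) * u x + (93/64) * u (x + h))
    + (1/64) * (v (x - h) - 12 * v x - 15 * v (x + h)))

lemma hermiteStencilError_sub (u v p q : ℝ → ℝ) (x h : ℝ) :
    hermiteStencilError (fun y ↦ u y - p y) (fun y ↦ v y - q y) x h =
      hermiteStencilError u v x h - hermiteStencilError p q x h := by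
  simp only [hermiteStencilError]
  ring

lemma hermiteStencilError_taylorWithinEval (u : ℝ → ℝ) (x : ℝ) {h : ℝ} (hh : h ≠ 0) :
    hermiteStencilError (taylorWithinEval u 5 univ x) (taylorWithinEval (deriv u) 4 univ x) x h
      = 0 := by
  simp only [hermiteStencilError, taylor_within_apply, Finset.sum_range_succ,
    Finset.sum_range_zero, iteratedDerivWithin_univ, ← iteratedDeriv_succ', smul_eq_mul,
    Nat.factorial]
  push_cast
  field_simp
  ring

lemma hermiteStencilError_isBigO {r s : ℝ → ℝ} {x : ℝ} {n : ℕ}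
    (hr : r =O[𝓝 x] fun y ↦ (y - x) ^ (n + 1)) (hs : s =O[𝓝 x] fun y ↦ (y - x) ^ n) :
    (fun h ↦ hermiteStencilError r s x h) =O[𝓝[≠] 0] fun h ↦ h ^ n := by
  have hvalues : (fun h ↦ (3/64) * r (x + -1 * h) - (3/2) * r (x + 0 * h)
      + (93/64) * r (x + 1 * h)) =O[𝓝 0] fun h ↦ h ^ (n + 1) :=
    (((hr.comp_add_mul _).const_mul_left _).sub ((hr.comp_add_mul _).const_mul_left _)).add
      ((hr.comp_add_mul _).const_mul_left _)
  have hderivs : (fun h ↦ s (x + 1/2 * h) - (1/64) * (s (x + -1 * h) - 12 * s (x + 0 * h)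
      - 15 * s (x + 1 * h))) =O[𝓝 0] fun h ↦ h ^ n :=
    (hs.comp_add_mul _).sub ((((hs.comp_add_mul _).sub ((hs.comp_add_mul _).const_mul_left _)).sub
      ((hs.comp_add_mul _).const_mul_left _)).const_mul_left _)
  have hdiv : (fun h : ℝ ↦ h⁻¹ * h ^ (n + 1)) =ᶠ[𝓝[≠] 0] fun h ↦ h ^ n := by
    filter_upwards [self_mem_nhdsWithin] with h hh
    rw [pow_succ', ← mul_assoc, inv_mul_cancel₀ hh, one_mul]
  have hquot := ((isBigO_refl (fun h : ℝ ↦ h⁻¹) _).mul (hvalues.mono nhdsWithin_le_nhds)).trans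
    hdiv.isBigO
  refine ((hderivs.mono nhdsWithin_le_nhds).sub hquot).congr_left fun h ↦ ?_
  simp only [hermiteStencilError]
  ring_nf

theorem hermite_full_stencil_derivative_fifth_order
    (u : ℝ → ℝ) (hu : ContDiff ℝ 6 u) (x : ℝ) :
    (fun h : ℝ =>
        deriv u (x + h / 2) -
          ((1 / h) * ((3/64) * u (x - h) - (3/2) * u x + (93/64) * u (x + h))
            + (1/64) * (deriv u (x - h) - 12 * deriv u x - 15 * deriv u (x + h))))
      =O[nhdsWithin 0 {0}ᶜ] fun h : ℝ => h ^ 5 := by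
  have hu' : ContDiff ℝ (4 + 1) (deriv u) := (contDiff_succ_iff_deriv (n := 5).mp hu).2.2
  have hr := sub_taylorWithinEval_isBigO (x₀ := x) (n := 5) hu
  have hs := sub_taylorWithinEval_isBigO (x₀ := x) hu'
  refine (hermiteStencilError_isBigO hr hs).congr' ?_ EventuallyEq.rfl
  filter_upwards [self_mem_nhdsWithin] with h hh
  rw [hermiteStencilError_sub, hermiteStencilError_taylorWithinEval u x hh, sub_zero,
    hermiteStencilError]
end

section
/- For every real polynomial p of degree at most 4, every x ∈ ℝ and every h ∈ ℝ with h ≠ 0, the derivative formula obtained from the quartic value interpolant is exact: p'(x + h/2) = (1/(16h))·(3·p(x-h) - 24·p(x) + 21·p(x+h) + h·p'(x-h) - 3h·p'(x+h)). -/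
theorem quartic_interpolant_derivative_exact
    (p : Polynomial ℝ) (hp : p.degree ≤ 4) (x h : ℝ) (hh : h ≠ 0) :
    p.derivative.eval (x + h / 2) =
      (1 / (16 * h)) * (3 * p.eval (x - h) - 24 * p.eval x + 21 * p.eval (x + h)
        + h * p.derivative.eval (x - h) - 3 * h * p.derivative.eval (x + h)) := by
  have hn : p.natDegree < 5 :=
    Nat.lt_succ_of_le (Polynomial.natDegree_le_iff_degree_le.mpr hp)
  have hdn : p.derivative.natDegree < 5 :=
    lt_of_le_of_lt (Polynomial.natDegree_derivative_le p) (lt_of_le_of_lt (Nat.sub_le _ _) hn)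
  have hev : ∀ y : ℝ, p.eval y = ∑ i ∈ Finset.range 5, p.coeff i * y ^ i := fun y =>
    Polynomial.eval_eq_sum_range' hn y
  have hdev : ∀ y : ℝ, p.derivative.eval y =
      ∑ i ∈ Finset.range 5, p.derivative.coeff i * y ^ i := fun y =>
    Polynomial.eval_eq_sum_range' hdn y
  have h5 : p.coeff 5 = 0 := Polynomial.coeff_eq_zero_of_natDegree_lt hn
  simp only [hev, hdev, Polynomial.coeff_derivative, Finset.sum_range_succ,
    Finset.sum_range_zero]
  norm_num [h5]
  field_simp
  ring
end

section
/- For every real polynomial p of degree at most 2, every x ∈ ℝ and every h ∈ ℝ with h ≠ 0, the sub-stencil derivative formula obtained from the quadratic value interpolant is exact: p'(x + h/2) = (1/h)·(-3·p(x-h) + 3·p(x)) - 2·p'(x-h). -/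
theorem quadratic_interpolant_derivative_exact
    (p : Polynomial ℝ) (hp : p.degree ≤ 2) (x h : ℝ) (hh : h ≠ 0) :
    p.derivative.eval (x + h / 2) =
      (1 / h) * (-3 * p.eval (x - h) + 3 * p.eval x) - 2 * p.derivative.eval (x - h) := by
  have hnd : p.natDegree < 3 := by
    have := Polynomial.natDegree_le_iff_degree_le.mpr hp
    exact lt_of_le_of_lt this (by norm_num)
  have hd : p.derivative.natDegree < 3 := lt_of_le_of_lt (Polynomial.natDegree_derivative_le p) (by omega)
  have he : ∀ y : ℝ, p.eval y = ∑ i ∈ Finset.range 3, p.coeff i * y ^ i := fun y =>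
    Polynomial.eval_eq_sum_range' hnd y
  have he' : ∀ y : ℝ, p.derivative.eval y = ∑ i ∈ Finset.range 3, p.derivative.coeff i * y ^ i :=
    fun y => Polynomial.eval_eq_sum_range' hd y
  have hc : ∀ i, p.derivative.coeff i = (i + 1 : ℝ) * p.coeff (i + 1) := by
    intro i; simp [Polynomial.coeff_derivative]; ring
  have h2 : p.coeff 3 = 0 := Polynomial.coeff_eq_zero_of_natDegree_lt (by omega)
  simp only [he, he', hc, Finset.sum_range_succ, Finset.sum_range_zero, h2]
  field_simp
  ring
end

section
/- Let E be a real Banach space, let f : E → E be infinitely differentiable (ContDiff ℝ ⊤), and define g : E → E by g(u) = (fderiv ℝ f u) (f u). Let u₀ ∈ E and let y : ℝ → E satisfy y(0) = u₀ and HasDerivAt y (f (y t)) t for all t ∈ ℝ. For k ∈ ℝ define the intermediate state u½(k) = u₀ + (k/2)·f(u₀) + (k²/8)·g(u₀) and the two-stage update Φ(k) = u₀ + k·f(u₀) + (k²/6)·g(u₀) + (k²/3)·g(u½(k)). Then the local error k ↦ y(k) - Φ(k) is O(k⁵) as k → 0 (IsBigO with respect to the filter 𝓝 0 of the function k ↦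 k⁵); i.e., the two-stage scheme is fourth-order accurate in time. -/
open Asymptotics Filter
lemma aux_base {E : Type*} [NormedAddCommGroup E] [NormedSpace ℝ E] {e : ℝ → E}
    (h : DifferentiableAt ℝ e 0) (h0 : e 0 = 0) :
    e =O[nhds 0] fun k : ℝ => k := by
  have := h.isBigO_sub
  simpa [h0] using this

lemma aux_step {E : Type*} [NormedAddCommGroup E] [NormedSpace ℝ E] {e e' : ℝ → E} {n : ℕ}
    (hd : ∀ t, HasDerivAt e (e' t) t) (h0 : e 0 = 0)
    (hO : e' =O[nhds 0] fun k : ℝ => k ^ n) :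
    e =O[nhds 0] fun k : ℝ => k ^ (n + 1) := by
  obtain ⟨C, hC0, hC⟩ := hO.exists_nonneg
  rw [isBigOWith_iff, Metric.eventually_nhds_iff] at hC
  obtain ⟨δ, hδ, hball⟩ := hC
  rw [isBigO_iff]
  refine ⟨C, Metric.eventually_nhds_iff.2 ⟨δ, hδ, fun {k} hk => ?_⟩⟩
  rw [Real.dist_eq, sub_zero] at hk
  have hseg : ∀ s ∈ Set.uIcc (0:ℝ) k, ‖e' s‖ ≤ C * |k| ^ n := by
    intro s hs
    have habs : |s| ≤ |k| := by
      rcases Set.mem_uIcc.mp hs with ⟨h1, h2⟩ | ⟨h1, h2⟩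
      · rw [abs_of_nonneg h1, abs_of_nonneg (h1.trans h2)]; exact h2
      · rw [abs_of_nonpos h2, abs_of_nonpos (h1.trans h2)]; linarith
    have hb := hball (show dist s 0 < δ by rw [Real.dist_eq, sub_zero]; exact habs.trans_lt hk)
    calc ‖e' s‖ ≤ C * ‖s ^ n‖ := hb
      _ = C * |s| ^ n := by rw [norm_pow, Real.norm_eq_abs]
      _ ≤ C * |k| ^ n := by gcongr
  have := (convex_uIcc (0:ℝ) k).norm_image_sub_le_of_norm_hasDerivWithin_le
    (f := e) (f' := e') (s := Set.uIcc (0:ℝ) k)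
    (fun s _ => (hd s).hasDerivWithinAt) hseg
    Set.left_mem_uIcc Set.right_mem_uIcc
  rw [h0, sub_zero, sub_zero, Real.norm_eq_abs] at this
  calc ‖e k‖ ≤ C * |k| ^ n * |k| := this
    _ = C * ‖k ^ (n+1)‖ := by rw [norm_pow, Real.norm_eq_abs, pow_succ]; ring

theorem two_stage_fourth_order_local_error
    {E : Type*} [NormedAddCommGroup E] [NormedSpace ℝ E] [CompleteSpace E]
    (f : E → E) (hf : ContDiff ℝ (⊤ : ℕ∞) f)
    (g : E → E) (hg : ∀ u, g u = (fderiv ℝ f u) (f u))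
    (u₀ : E) (y : ℝ → E) (hy0 : y 0 = u₀)
    (hy : ∀ t : ℝ, HasDerivAt y (f (y t)) t) :
    (fun k : ℝ =>
        y k -
          (u₀ + k • f u₀ + (k ^ 2 / 6) • g u₀
            + (k ^ 2 / 3) • g (u₀ + (k / 2) • f u₀ + (k ^ 2 / 8) • g u₀)))
      =O[nhds 0] fun k : ℝ => k ^ 5 := by
  -- smoothness of g
  have hgsm : ContDiff ℝ (⊤ : ℕ∞) g := by
    have : ContDiff ℝ (⊤ : ℕ∞) fun u => (fderiv ℝ f u) (f u) :=
      (hf.fderiv_right (m := (⊤ : ℕ∞)) (by simp)).clm_apply hf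
    have hgeq : g = fun u => (fderiv ℝ f u) (f u) := funext hg
    rw [hgeq]; exact this
  set g₃ : E → E := fun u => fderiv ℝ g u (f u) with hg₃def
  have hg₃sm : ContDiff ℝ (⊤ : ℕ∞) g₃ :=
    (hgsm.fderiv_right (m := (⊤ : ℕ∞)) (by simp)).clm_apply hf
  set g₄ : E → E := fun u => fderiv ℝ g₃ u (f u) with hg₄def
  have hg₄sm : ContDiff ℝ (⊤ : ℕ∞) g₄ :=
    (hg₃sm.fderiv_right (m := (⊤ : ℕ∞)) (by simp)).clm_apply hf
  set a : E := f u₀ with ha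
  set b : E := g u₀ with hb
  set c : E := g₃ u₀ with hc
  set d : E := g₄ u₀ with hd
  -- derivatives of compositions with y
  have hy1 : ∀ t, HasDerivAt (fun t => f (y t)) (g (y t)) t := by
    intro t
    have := ((hf.differentiable (by simp) (y t)).hasFDerivAt).comp_hasDerivAt t (hy t)
    simpa [Function.comp_def, hg] using this
  have hy2 : ∀ t, HasDerivAt (fun t => g (y t)) (g₃ (y t)) t := by
    intro t
    have := ((hgsm.differentiable (by simp) (y t)).hasFDerivAt).comp_hasDerivAt t (hy t)
    simpa [Function.comp_def] using this
  have hy3 : ∀ t, HasDerivAt (fun t => g₃ (y t)) (g₄ (y t)) t := by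
    intro t
    have := ((hg₃sm.differentiable (by simp) (y t)).hasFDerivAt).comp_hasDerivAt t (hy t)
    simpa [Function.comp_def] using this
  -- the intermediate state and its derivatives
  set w : ℝ → E := fun k => u₀ + (k / 2) • a + (k ^ 2 / 8) • b with hwdef
  set w' : ℝ → E := fun k => (1/2 : ℝ) • a + (k/4) • b with hw'def
  have hsc1 : ∀ k : ℝ, HasDerivAt (fun k : ℝ => k / 2) (1/2) k := by
    intro k; simpa using (hasDerivAt_id k).div_const 2
  have hsc2 : ∀ k : ℝ, HasDerivAt (fun k : ℝ => k ^ 2 / 8) (k / 4) k := by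
    intro k
    have := (hasDerivAt_pow 2 k).div_const 8
    norm_num at this
    exact this.congr_deriv (by ring)
  have hw : ∀ k, HasDerivAt w (w' k) k := by
    intro k
    have := ((hasDerivAt_const k u₀).add ((hsc1 k).smul_const a)).add ((hsc2 k).smul_const b)
    simpa [hwdef, hw'def, Pi.add_def, Pi.sub_def] using this
  have hw' : ∀ k, HasDerivAt w' ((1/4 : ℝ) • b) k := by
    intro k
    have := (hasDerivAt_const k ((1/2 : ℝ) • a)).add (((hasDerivAt_id k).div_const 4).smul_const b)
    simpa [hw'def, Pi.add_def, Pi.sub_def] using this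
  have hwdiff : Differentiable ℝ w := fun k => (hw k).differentiableAt
  have hw'diff : Differentiable ℝ w' := fun k => (hw' k).differentiableAt
  -- h = g ∘ w and its derivatives
  have hh : ∀ k, HasDerivAt (fun k => g (w k)) ((fderiv ℝ g (w k)) (w' k)) k := by
    intro k
    have := ((hgsm.differentiable (by simp) (w k)).hasFDerivAt).comp_hasDerivAt k (hw k)
    simpa [Function.comp_def] using this
  have hA : ∀ k, HasDerivAt (fun k => fderiv ℝ g (w k))
      ((fderiv ℝ (fderiv ℝ g) (w k)) (w' k)) k := by
    intro k
    have := (((hgsm.fderiv_right (m := (⊤ : ℕ∞)) (by simp)).differentiable (by simp)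
      (w k)).hasFDerivAt).comp_hasDerivAt k (hw k)
    simpa [Function.comp_def] using this
  set h' : ℝ → E := fun k => (fderiv ℝ g (w k)) (w' k) with hh'def
  have hh' : ∀ k, HasDerivAt h'
      (((fderiv ℝ (fderiv ℝ g) (w k)) (w' k)) (w' k)
        + (fderiv ℝ g (w k)) ((1/4 : ℝ) • b)) k := by
    intro k
    exact (hA k).clm_apply (hw' k)
  -- value identities
  have hw0 : w 0 = u₀ := by simp [hwdef]
  have hw'0 : w' 0 = (1/2 : ℝ) • a := by simp [hw'def]
  have hfa : fderiv ℝ f u₀ a = b := by rw [ha, ← hg]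
  have hd_eq : d = ((fderiv ℝ (fderiv ℝ g) u₀) a) a + (fderiv ℝ g u₀) b := by
    have hdiff1 : DifferentiableAt ℝ (fderiv ℝ g) u₀ :=
      (hgsm.fderiv_right (m := (⊤ : ℕ∞)) (by simp)).differentiable (by simp) u₀
    have hdiff2 : DifferentiableAt ℝ f u₀ := hf.differentiable (by simp) u₀
    have := fderiv_clm_apply (𝕜 := ℝ) (c := fderiv ℝ g) (u := f) (x := u₀) hdiff1 hdiff2
    rw [hd, hg₄def]
    simp only [hg₃def]
    rw [this]
    simp [hfa, ← ha]
    abel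
  -- the q-chain : Taylor expansion of g ∘ w to second order
  set q₂ : ℝ → E := fun k =>
    ((fderiv ℝ (fderiv ℝ g) (w k)) (w' k)) (w' k)
      + (fderiv ℝ g (w k)) ((1/4 : ℝ) • b) - (1/4 : ℝ) • d with hq₂def
  have hq₂0 : q₂ 0 = 0 := by
    rw [hq₂def]
    simp only [hw0, hw'0, map_smul, ContinuousLinearMap.smul_apply, hd_eq]
    rw [smul_add]
    module
  have hq₂diff : DifferentiableAt ℝ q₂ 0 := by
    apply DifferentiableAt.sub_const
    apply DifferentiableAt.add
    · exact (((((hgsm.fderiv_right (m := (⊤ : ℕ∞)) (by simp)).fderiv_right (m := (⊤ : ℕ∞))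
        (by simp)).differentiable (by simp)).comp hwdiff 0).clm_apply (hw'diff 0)).clm_apply
        (hw'diff 0)
    · exact ((((hgsm.fderiv_right (m := (⊤ : ℕ∞)) (by simp)).differentiable (by simp)).comp
        hwdiff 0).clm_apply (differentiable_const _ 0))
  have hq₂O : q₂ =O[nhds 0] fun k : ℝ => k ^ 1 := by
    simpa using aux_base hq₂diff hq₂0
  set q₁ : ℝ → E := fun k => h' k - ((1/2 : ℝ) • c + (k/4) • d) with hq₁def
  have hq₁d : ∀ k, HasDerivAt q₁ (q₂ k) k := by
    intro k
    have := (hh' k).sub ((hasDerivAt_const k ((1/2 : ℝ) • c)).add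
      (((hasDerivAt_id k).div_const 4).smul_const d))
    simpa [hq₁def, hq₂def, Pi.add_def, Pi.sub_def] using this
  have hq₁0 : q₁ 0 = 0 := by
    rw [hq₁def]
    simp only [hh'def, hw0, hw'0, map_smul, hc, hg₃def, ← ha]
    module
  have hq₁O : q₁ =O[nhds 0] fun k : ℝ => k ^ 2 := aux_step hq₁d hq₁0 hq₂O
  set q₀ : ℝ → E := fun k => g (w k) - (b + (k/2) • c + (k ^ 2 / 8) • d) with hq₀def
  have hq₀d : ∀ k, HasDerivAt q₀ (q₁ k) k := by
    intro k
    have := (hh k).sub (((hasDerivAt_const k b).add ((hsc1 k).smul_const c)).add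
      ((hsc2 k).smul_const d))
    simpa [hq₀def, hq₁def, hh'def, add_assoc, Pi.add_def, Pi.sub_def] using this
  have hq₀0 : q₀ 0 = 0 := by simp [hq₀def, hw0, ← hb]
  have hq₀O : q₀ =O[nhds 0] fun k : ℝ => k ^ 3 := aux_step hq₀d hq₀0 hq₁O
  -- the e-chain : Taylor expansion of y to fourth order
  set P : ℝ → E := fun k =>
    u₀ + k • a + (k ^ 2 / 2) • b + (k ^ 3 / 6) • c + (k ^ 4 / 24) • d with hPdef
  set e₄ : ℝ → E := fun k => g₄ (y k) - d with he₄def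
  set e₃ : ℝ → E := fun k => g₃ (y k) - (c + k • d) with he₃def
  set e₂ : ℝ → E := fun k => g (y k) - (b + k • c + (k ^ 2 / 2) • d) with he₂def
  set e₁ : ℝ → E := fun k => f (y k) - (a + k • b + (k ^ 2 / 2) • c + (k ^ 3 / 6) • d)
    with he₁def
  set e₀ : ℝ → E := fun k => y k - P k with he₀def
  have hsc3 : ∀ k : ℝ, HasDerivAt (fun k : ℝ => k ^ 3 / 6) (k ^ 2 / 2) k := by
    intro k
    have := (hasDerivAt_pow 3 k).div_const 6
    norm_num at this
    exact this.congr_deriv (by ring)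
  have hsc4 : ∀ k : ℝ, HasDerivAt (fun k : ℝ => k ^ 4 / 24) (k ^ 3 / 6) k := by
    intro k
    have := (hasDerivAt_pow 4 k).div_const 24
    norm_num at this
    exact this.congr_deriv (by ring)
  have hsc2' : ∀ k : ℝ, HasDerivAt (fun k : ℝ => k ^ 2 / 2) k k := by
    intro k
    have := (hasDerivAt_pow 2 k).div_const 2
    norm_num at this
    convert this using 1 <;> ring_nf
  have he₄0 : e₄ 0 = 0 := by simp [he₄def, hy0, ← hd]
  have he₄diff : DifferentiableAt ℝ e₄ 0 := by
    apply DifferentiableAt.sub_const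
    exact ((hg₄sm.differentiable (by simp)).comp (fun t => (hy t).differentiableAt)) 0
  have he₄O : e₄ =O[nhds 0] fun k : ℝ => k ^ 1 := by
    simpa using aux_base he₄diff he₄0
  have he₃d : ∀ k, HasDerivAt e₃ (e₄ k) k := by
    intro k
    have := (hy3 k).sub ((hasDerivAt_const k c).add ((hasDerivAt_id k).smul_const d))
    simpa [he₃def, he₄def, Pi.add_def, Pi.sub_def] using this
  have he₃0 : e₃ 0 = 0 := by simp [he₃def, hy0, ← hc]
  have he₃O : e₃ =O[nhds 0] fun k : ℝ => k ^ 2 := aux_step he₃d he₃0 he₄O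
  have he₂d : ∀ k, HasDerivAt e₂ (e₃ k) k := by
    intro k
    have := (hy2 k).sub (((hasDerivAt_const k b).add ((hasDerivAt_id k).smul_const c)).add
      ((hsc2' k).smul_const d))
    simpa [he₂def, he₃def, add_assoc, Pi.add_def, Pi.sub_def] using this
  have he₂0 : e₂ 0 = 0 := by simp [he₂def, hy0, ← hb]
  have he₂O : e₂ =O[nhds 0] fun k : ℝ => k ^ 3 := aux_step he₂d he₂0 he₃O
  have he₁d : ∀ k, HasDerivAt e₁ (e₂ k) k := by
    intro k
    have := (hy1 k).sub ((((hasDerivAt_const k a).add ((hasDerivAt_id k).smul_const b)).add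
      ((hsc2' k).smul_const c)).add ((hsc3 k).smul_const d))
    simpa [he₁def, he₂def, add_assoc, Pi.add_def, Pi.sub_def] using this
  have he₁0 : e₁ 0 = 0 := by simp [he₁def, hy0, ← ha]
  have he₁O : e₁ =O[nhds 0] fun k : ℝ => k ^ 4 := aux_step he₁d he₁0 he₂O
  have he₀d : ∀ k, HasDerivAt e₀ (e₁ k) k := by
    intro k
    have := (hy k).sub ((((hasDerivAt_const k u₀).add ((hasDerivAt_id k).smul_const a)).add
      ((hsc2' k).smul_const b)).add ((hsc3 k).smul_const c) |>.add ((hsc4 k).smul_const d))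
    simpa [he₀def, hPdef, he₁def, add_assoc, Pi.add_def, Pi.sub_def] using this
  have he₀0 : e₀ 0 = 0 := by simp [he₀def, hPdef, hy0]
  have he₀O : e₀ =O[nhds 0] fun k : ℝ => k ^ 5 := aux_step he₀d he₀0 he₁O
  -- assembly
  have hsplit : (fun k : ℝ =>
        y k -
          (u₀ + k • f u₀ + (k ^ 2 / 6) • g u₀
            + (k ^ 2 / 3) • g (u₀ + (k / 2) • f u₀ + (k ^ 2 / 8) • g u₀)))
      = fun k : ℝ => e₀ k - (k ^ 2 / 3) • q₀ k := by
    funext k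
    rw [he₀def, hq₀def, hPdef]
    simp only [← ha, ← hb, hwdef]
    module
  rw [hsplit]
  have hsmul : (fun k : ℝ => (k ^ 2 / 3) • q₀ k) =O[nhds 0] fun k : ℝ => k ^ 5 := by
    have h1 : (fun k : ℝ => k ^ 2 / 3) =O[nhds (0:ℝ)] fun k : ℝ => k ^ 2 := by
      simpa [div_eq_inv_mul] using
        isBigO_const_mul_self ((3:ℝ)⁻¹) (fun k : ℝ => k ^ 2) (nhds 0)
    have := h1.smul hq₀O
    exact this.congr (fun x => rfl) (fun x => by simp [smul_eq_mul]; ring)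
  exact he₀O.sub hsmul
end
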